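/- arXiv:2510.25630 — 2 statements merged into one kernel-verified Lean document; each statement's English description precedes it below -/
import Mathlib

section
/- (Poisson summation for all polynomials of fixed degree) Let q be prime, f ∈ F_q[t] of degree n, m a positive integer, and F a function periodic modulo f with Fourier transform F̂(u;f) = Σ_{V mod f} F(V)e(uV/f). Then Σ_{g ∈ F_q[t], deg g = m} F(g) = (q^m/|f|)·( − Σ_{deg V = n−m−1} F̂(V;f) + (q−1) Σ_{deg V < n−m−1} F̂(V;f) ). -/
open Polynomial

noncomputable def res {F : Type} [Field F] {n : ℕ} (c : Fin n → F) : Polynomial F :=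
  ∑ i : Fin n, Polynomial.C (c i) * Polynomial.X ^ (i : ℕ)

noncomputable def tvar (q : ℕ) [Fact (Nat.Prime q)] : LaurentSeries (ZMod q) :=
  (HahnSeries.single (1 : ℤ) (1 : ZMod q))⁻¹

noncomputable def polyToLS (q : ℕ) [Fact (Nat.Prime q)] (A : Polynomial (ZMod q)) :
    LaurentSeries (ZMod q) :=
  Polynomial.eval₂ (algebraMap (ZMod q) (LaurentSeries (ZMod q))) (tvar q) A

noncomputable def eChar (q : ℕ) [Fact (Nat.Prime q)] (a : LaurentSeries (ZMod q)) : ℂ :=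
  Complex.exp (2 * Real.pi * Complex.I * (((a.coeff 1).val : ℂ)) / q)

variable (q : ℕ) [Fact (Nat.Prime q)]

lemma tvar_eq : tvar q = HahnSeries.single (-1 : ℤ) (1 : ZMod q) := by
  unfold tvar
  refine inv_eq_of_mul_eq_one_right ?_
  rw [HahnSeries.single_mul_single]
  norm_num [HahnSeries.single_zero_one]

lemma polyToLS_coeff (A : Polynomial (ZMod q)) (d : ℤ) :
    (polyToLS q A).coeff d = if d ≤ 0 then A.coeff (-d).toNat else 0 := by
  induction A using Polynomial.induction_on' with
  | add p r hp hr =>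
    unfold polyToLS at *
    rw [Polynomial.eval₂_add, HahnSeries.coeff_add, hp, hr, Polynomial.coeff_add]
    split <;> simp
  | monomial i a =>
    unfold polyToLS
    rw [Polynomial.eval₂_monomial, tvar_eq, HahnSeries.single_pow,
      show (algebraMap (ZMod q) (LaurentSeries (ZMod q))) a
        = HahnSeries.ofPowerSeries ℤ (ZMod q) (PowerSeries.C a) from rfl,
      HahnSeries.ofPowerSeries_C, HahnSeries.C_apply,
      HahnSeries.single_mul_single, zero_add, one_pow, HahnSeries.coeff_single,
      Polynomial.coeff_monomial]
    have hsm : i • (-1 : ℤ) = -(i : ℤ) := by simp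
    rw [hsm, mul_one]
    rcases le_or_gt d 0 with h | h
    · rw [if_pos h]
      by_cases he : d = -(i : ℤ)
      · rw [if_pos he, if_pos (by omega)]
      · rw [if_neg he, if_neg (by omega)]
    · rw [if_neg (by omega), if_neg (by omega)]

lemma polyToLS_ne_zero {A : Polynomial (ZMod q)} (hA : A ≠ 0) : polyToLS q A ≠ 0 := by
  intro h
  have := polyToLS_coeff q A (-(A.natDegree : ℤ))
  rw [h] at this
  simp only [HahnSeries.coeff_zero, neg_neg, Int.toNat_natCast] at this
  rw [if_pos (by omega)] at this
  exact Polynomial.coeff_ne_zero_of_eq_degree (Polynomial.degree_eq_natDegree hA) this.symm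

lemma polyToLS_order {A : Polynomial (ZMod q)} (hA : A ≠ 0) :
    (polyToLS q A).order = -(A.natDegree : ℤ) := by
  have hne := polyToLS_ne_zero q hA
  refine le_antisymm (HahnSeries.order_le_of_coeff_ne_zero ?_) ?_
  · rw [polyToLS_coeff, if_pos (by omega)]
    simp only [neg_neg, Int.toNat_natCast]
    exact fun h => hA (Polynomial.leadingCoeff_eq_zero.mp h)
  · by_contra hlt
    push_neg at hlt
    have h0 := mt HahnSeries.coeff_order_eq_zero.mp hne
    rw [polyToLS_coeff] at h0
    rcases le_or_gt (polyToLS q A).order 0 with h | h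
    · rw [if_pos h] at h0
      exact h0 (Polynomial.coeff_eq_zero_of_natDegree_lt (by omega))
    · rw [if_neg (by omega)] at h0; exact h0 rfl

lemma keyA (f : Polynomial (ZMod q)) (hf : f ≠ 0) (A : Polynomial (ZMod q))
    (hA : A.degree < f.degree) :
    ((polyToLS q A) / (polyToLS q f)).coeff 1
      = A.coeff (f.natDegree - 1) * (f.coeff f.natDegree)⁻¹ := by
  rcases eq_or_ne A 0 with rfl | hA0
  · simp [polyToLS]
  set n := f.natDegree with hnn
  have hdeg : A.natDegree < n := Polynomial.natDegree_lt_natDegree hA0 hA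
  have hn1 : 1 ≤ n := by omega
  have hfne := polyToLS_ne_zero q hf
  have hAne := polyToLS_ne_zero q hA0
  set L := polyToLS q A / polyToLS q f with hL
  have hLf : L * polyToLS q f = polyToLS q A := div_mul_cancel₀ _ hfne
  have hLne : L ≠ 0 := by
    intro h; rw [h, zero_mul] at hLf; exact hAne hLf.symm
  have horder : L.order = (n : ℤ) - A.natDegree := by
    have := HahnSeries.order_mul hLne hfne
    rw [hLf, polyToLS_order q hA0, polyToLS_order q hf] at this
    omega
  rcases eq_or_lt_of_le (Nat.succ_le_of_lt hdeg) with he | hlt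
  · -- A.natDegree = n - 1, order L = 1
    have hord1 : L.order = 1 := by omega
    have hmul := HahnSeries.coeff_mul_order_add_order L (polyToLS q f)
    rw [hLf, HahnSeries.leadingCoeff_eq, HahnSeries.leadingCoeff_eq, hord1,
      polyToLS_order q hf] at hmul
    rw [polyToLS_coeff, if_pos (by omega), polyToLS_coeff, if_pos (by omega)] at hmul
    have h1 : ((-(1 + -(n:ℤ))).toNat) = n - 1 := by omega
    have h2 : ((-(-(n:ℤ))).toNat) = n := by omega
    rw [h1, h2] at hmul
    have hc : f.coeff n ≠ 0 := fun h => hf (Polynomial.leadingCoeff_eq_zero.mp h)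
    field_simp [hmul]
    exact hmul.symm
  · -- A.natDegree < n - 1 : both sides are zero
    have : (1:ℤ) < L.order := by omega
    rw [HahnSeries.coeff_eq_zero_of_lt_order this,
      Polynomial.coeff_eq_zero_of_natDegree_lt (by omega), zero_mul]

lemma eChar_eq_std (a : LaurentSeries (ZMod q)) :
    eChar q a = ZMod.stdAddChar (a.coeff 1) := by
  haveI : NeZero q := ⟨(Fact.out : q.Prime).ne_zero⟩
  rw [ZMod.stdAddChar_apply, ZMod.toCircle_apply, eChar]

lemma sum_std (b : ZMod q) :
    ∑ x : ZMod q, ZMod.stdAddChar (x * b) = if b = 0 then (q : ℂ) else 0 := by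
  haveI : NeZero q := ⟨(Fact.out : q.Prime).ne_zero⟩
  split_ifs with h
  · simp only [h, mul_zero, AddChar.map_zero_eq_one, Finset.sum_const, Finset.card_univ,
      ZMod.card, nsmul_eq_mul, mul_one]
  · have := AddChar.sum_eq_zero_of_ne_one (ZMod.isPrimitive_stdAddChar q h)
    rw [← this]
    exact Finset.sum_congr rfl fun x _ => by rw [AddChar.mulShift_apply, mul_comm]

lemma sum_units_std (b : ZMod q) :
    ∑ a : (ZMod q)ˣ, ZMod.stdAddChar ((a : ZMod q) * b)
      = (if b = 0 then (q : ℂ) else 0) - 1 := by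
  haveI : NeZero q := ⟨(Fact.out : q.Prime).ne_zero⟩
  rw [← sum_std q b, ← Finset.add_sum_erase _ _ (Finset.mem_univ (0 : ZMod q)),
    zero_mul, AddChar.map_zero_eq_one]
  rw [show (1 : ℂ) + ∑ x ∈ Finset.univ.erase 0, ZMod.stdAddChar (x * b) - 1
      = ∑ x ∈ Finset.univ.erase 0, ZMod.stdAddChar (x * b) by ring]
  refine Finset.sum_nbij' (fun a => (a : ZMod q)) (fun x => if h : x = 0 then 1 else Units.mk0 x h)
    ?_ ?_ ?_ ?_ ?_
  · intro a _; simp [Finset.mem_erase, Units.ne_zero a]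
  · intro x hx; simp
  · intro a _
    simp [Finset.mem_erase, Units.ne_zero a]
  · intro x hx
    rw [Finset.mem_erase] at hx
    simp [hx.1]
  · intro a _; rfl

lemma addchar_sum {ι : Type} (s : Finset ι) (g : ι → ZMod q) :
    ZMod.stdAddChar (∑ i ∈ s, g i) = ∏ i ∈ s, ZMod.stdAddChar (g i) := by
  induction s using Finset.cons_induction with
  | empty => simp [AddChar.map_zero_eq_one]
  | cons a s ha ih => rw [Finset.sum_cons, Finset.prod_cons, AddChar.map_add_eq_mul, ih]

lemma res_coeff {n : ℕ} (c : Fin n → ZMod q) (j : ℕ) :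
    (res c).coeff j = if h : j < n then c ⟨j, h⟩ else 0 := by
  unfold res
  rw [Polynomial.finset_sum_coeff]
  simp only [Polynomial.coeff_C_mul, Polynomial.coeff_X_pow, mul_ite, mul_one, mul_zero]
  by_cases h : j < n
  · rw [dif_pos h, Finset.sum_eq_single (⟨j, h⟩ : Fin n)]
    · simp
    · intro b _ hb
      rw [if_neg]
      exact fun he => hb (by ext; simp only [Fin.val_mk]; omega)
    · simp
  · rw [dif_neg h]
    refine Finset.sum_eq_zero fun i _ => ?_
    rw [if_neg (by omega)]

lemma res_degree {n : ℕ} (c : Fin n → ZMod q) : (res c).degree < (n : ℕ) := by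
  rw [Polynomial.degree_lt_iff_coeff_zero]
  intro j hj
  rw [res_coeff, dif_neg (by exact_mod_cast fun h => absurd hj (by push_cast; omega))]

lemma res_split {m' n : ℕ} (hmn : m' < n) (a : ZMod q) (c : Fin m' → ZMod q) :
    res (fun j : Fin n => if h : (j : ℕ) < m' then c ⟨j, h⟩ else if (j : ℕ) = m' then a else 0)
      = Polynomial.C a * Polynomial.X ^ m' + res c := by
  ext j
  rw [Polynomial.coeff_add, Polynomial.coeff_C_mul, Polynomial.coeff_X_pow,
    res_coeff, res_coeff]
  simp only [Fin.val_mk]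
  by_cases h1 : j < m'
  · rw [dif_pos (by omega), dif_pos h1, dif_pos h1, if_neg (by omega)]
    simp
  · by_cases h2 : j = m'
    · rw [dif_pos (by omega), dif_neg (by omega), dif_neg h1, if_pos h2, if_pos (by omega)]
      simp
    · rw [dif_neg h1, if_neg h2]
      by_cases h3 : j < n
      · rw [dif_pos h3, dif_neg (by simpa using h1), if_neg (by simpa using h2)]
        simp
      · rw [dif_neg h3]
        simp

/-- Poisson summation for all polynomials of fixed degree: for `F` periodic mod `f`
(`deg f = n`), `1 ≤ m` and `m + 1 ≤ n`,
`Σ_{deg g = m} F(g) = (q^m/|f|)·(-Σ_{deg V = n-m-1} F̂(V;f) + (q-1) Σ_{deg V < n-m-1} F̂(V;f))`.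
Polynomials of exact degree `k` are parametrized as `C a · X^k + res c` with `a` a unit. -/
theorem poisson_summation_all_degrees (q : ℕ) [Fact (Nat.Prime q)]
    (f : Polynomial (ZMod q)) (n m : ℕ) (hf : f ≠ 0) (hn : f.natDegree = n)
    (hm : 0 < m) (hmn : m + 1 ≤ n)
    (F : Polynomial (ZMod q) → ℂ)
    (hper : ∀ A B : Polynomial (ZMod q), f ∣ (A - B) → F A = F B)
    (Fhat : Polynomial (ZMod q) → ℂ)
    (hFhat : ∀ u : Polynomial (ZMod q),
      Fhat u = ∑ c : Fin n → ZMod q,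
        F (res c) * eChar q (polyToLS q (u * res c) / polyToLS q f)) :
    ∑ a : (ZMod q)ˣ, ∑ c : Fin m → ZMod q,
        F (Polynomial.C (a : ZMod q) * Polynomial.X ^ m + res c)
      = ((q : ℂ) ^ m / (q : ℂ) ^ n) *
        (-(∑ a : (ZMod q)ˣ, ∑ c : Fin (n - m - 1) → ZMod q,
              Fhat (Polynomial.C (a : ZMod q) * Polynomial.X ^ (n - m - 1) + res c))
          + ((q : ℂ) - 1) * ∑ c : Fin (n - m - 1) → ZMod q, Fhat (res c)) := by
  classical
  haveI : NeZero q := ⟨(Fact.out : q.Prime).ne_zero⟩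
  have hq0 : (q : ℂ) ≠ 0 := Nat.cast_ne_zero.mpr (Fact.out : q.Prime).ne_zero
  set k := n - m - 1 with hkdef
  have hk : k + m + 1 = n := by omega
  have hfd : f.degree = (n : ℕ) := by rw [Polynomial.degree_eq_natDegree hf, hn]
  have hc0 : f.coeff n ≠ 0 := by
    rw [← hn]; exact fun h => hf (Polynomial.leadingCoeff_eq_zero.mp h)
  obtain ⟨α, hαdef⟩ : ∃ α : Polynomial (ZMod q) → ZMod q,
      ∀ A, α A = ((polyToLS q A) / (polyToLS q f)).coeff 1 := ⟨_, fun _ => rfl⟩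
  have hα0 : α 0 = 0 := by
    rw [hαdef]
    simp [polyToLS]
  have hαadd : ∀ A B, α (A + B) = α A + α B := by
    intro A B
    simp only [hαdef, polyToLS, Polynomial.eval₂_add, add_div, HahnSeries.coeff_add]
  have hαC : ∀ (s : ZMod q) (A : Polynomial (ZMod q)),
      α (Polynomial.C s * A) = s * α A := by
    intro s A
    have h1 : polyToLS q (Polynomial.C s * A)
        = HahnSeries.single (0 : ℤ) s * polyToLS q A := by
      rw [polyToLS, Polynomial.eval₂_mul, Polynomial.eval₂_C,
        show (algebraMap (ZMod q) (LaurentSeries (ZMod q))) s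
          = HahnSeries.ofPowerSeries ℤ (ZMod q) (PowerSeries.C s) from rfl,
        HahnSeries.ofPowerSeries_C, HahnSeries.C_apply]
      rfl
    rw [hαdef, hαdef, h1, mul_div_assoc]
    simpa using HahnSeries.single_mul_coeff_add
      (r := s) (x := polyToLS q A / polyToLS q f) (a := (1 : ℤ)) (b := (0 : ℤ))
  have hβ : ∀ (V : Polynomial (ZMod q)) (i : ℕ), (V = 0 ∨ V.natDegree + i < n) →
      α (Polynomial.X ^ i * V) = V.coeff (n - 1 - i) * (f.coeff n)⁻¹ := by
    intro V i hVi
    rcases eq_or_ne V 0 with rfl | hV0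
    · rw [mul_zero, hα0, Polynomial.coeff_zero, zero_mul]
    · have hVi' : V.natDegree + i < n := hVi.resolve_left hV0
      have hXV : (Polynomial.X ^ i * V) ≠ 0 :=
        mul_ne_zero (pow_ne_zero _ Polynomial.X_ne_zero) hV0
      have hdeg : (Polynomial.X ^ i * V).degree < f.degree := by
        rw [hfd, Polynomial.degree_eq_natDegree hXV, Nat.cast_lt,
          Polynomial.natDegree_mul (pow_ne_zero _ Polynomial.X_ne_zero) hV0,
          Polynomial.natDegree_X_pow]
        omega
      have hK := keyA q f hf _ hdeg
      rw [hn] at hK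
      rw [hαdef, hK, show n - 1 = (n - 1 - i) + i by omega, Polynomial.coeff_X_pow_mul,
        show n - 1 - i + i - i = n - 1 - i by omega]
  have hprodsum : ∀ (j : ℕ) (V : Polynomial (ZMod q)),
      ∑ c : Fin j → ZMod q, ZMod.stdAddChar (α (res c * V))
        = ∏ i : Fin j, (if α (Polynomial.X ^ (i : ℕ) * V) = 0 then (q : ℂ) else 0) := by
    intro j V
    have hres : ∀ c : Fin j → ZMod q,
        α (res c * V) = ∑ i : Fin j, c i * α (Polynomial.X ^ (i : ℕ) * V) := by
      intro c
      rw [res, Finset.sum_mul,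
        show (∑ i : Fin j, Polynomial.C (c i) * Polynomial.X ^ (i : ℕ) * V)
          = ∑ i : Fin j, Polynomial.C (c i) * (Polynomial.X ^ (i : ℕ) * V) from
          Finset.sum_congr rfl fun i _ => mul_assoc _ _ _]
      exact (map_sum (AddMonoidHom.mk' α hαadd) _ Finset.univ).trans
        (Finset.sum_congr rfl fun i _ => hαC _ _)
    calc ∑ c : Fin j → ZMod q, ZMod.stdAddChar (α (res c * V))
        = ∑ c : Fin j → ZMod q, ∏ i : Fin j,
            ZMod.stdAddChar (c i * α (Polynomial.X ^ (i : ℕ) * V)) := by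
          exact Finset.sum_congr rfl fun c _ => by rw [hres c, addchar_sum]
      _ = ∏ i : Fin j, ∑ s : ZMod q, ZMod.stdAddChar (s * α (Polynomial.X ^ (i : ℕ) * V)) := by
          rw [Finset.prod_univ_sum]
          exact (Finset.sum_congr (by rw [Fintype.piFinset_univ]) fun _ _ => rfl).symm
      _ = ∏ i : Fin j, (if α (Polynomial.X ^ (i : ℕ) * V) = 0 then (q : ℂ) else 0) :=
          Finset.prod_congr rfl fun i _ => sum_std q _
  have hcross : ∀ V : Polynomial (ZMod q),
      ∑ a : (ZMod q)ˣ, ∑ c : Fin k → ZMod q,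
          ZMod.stdAddChar (α ((Polynomial.C (a : ZMod q) * Polynomial.X ^ k + res c) * V))
        = ((if α (Polynomial.X ^ k * V) = 0 then (q : ℂ) else 0) - 1) *
            ∏ i : Fin k, (if α (Polynomial.X ^ (i : ℕ) * V) = 0 then (q : ℂ) else 0) := by
    intro V
    have hsplit : ∀ (a : ZMod q) (c : Fin k → ZMod q),
        α ((Polynomial.C a * Polynomial.X ^ k + res c) * V)
          = a * α (Polynomial.X ^ k * V) + α (res c * V) := by
      intro a c
      rw [add_mul, hαadd, mul_assoc, hαC]
    calc ∑ a : (ZMod q)ˣ, ∑ c : Fin k → ZMod q,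
          ZMod.stdAddChar (α ((Polynomial.C (a : ZMod q) * Polynomial.X ^ k + res c) * V))
        = ∑ a : (ZMod q)ˣ, ∑ c : Fin k → ZMod q,
            ZMod.stdAddChar ((a : ZMod q) * α (Polynomial.X ^ k * V))
              * ZMod.stdAddChar (α (res c * V)) := by
          exact Finset.sum_congr rfl fun a _ => Finset.sum_congr rfl fun c _ => by
            rw [hsplit, AddChar.map_add_eq_mul]
      _ = (∑ a : (ZMod q)ˣ, ZMod.stdAddChar ((a : ZMod q) * α (Polynomial.X ^ k * V)))
            * ∑ c : Fin k → ZMod q, ZMod.stdAddChar (α (res c * V)) := by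
          rw [Finset.sum_mul_sum]
      _ = _ := by rw [sum_units_std, hprodsum]
  have hkey : ∀ c' : Fin n → ZMod q,
      -(∑ a : (ZMod q)ˣ, ∑ c : Fin k → ZMod q,
          ZMod.stdAddChar (α ((Polynomial.C (a : ZMod q) * Polynomial.X ^ k + res c) * res c')))
        + ((q : ℂ) - 1) * ∑ c : Fin k → ZMod q, ZMod.stdAddChar (α (res c * res c'))
      = if (res c').degree = (m : ℕ) then (q : ℂ) ^ (n - m) else 0 := by
    intro c'
    have hVn : (res c').degree < (n : ℕ) := res_degree q c'
    rw [hcross (res c'), hprodsum k (res c')]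
    rcases lt_trichotomy (res c').degree ((m : ℕ) : WithBot ℕ) with hd | hd | hd
    · -- degree < m : everything vanishes
      have hzero : ∀ i : ℕ, i ≤ k → α (Polynomial.X ^ i * res c') = 0 := by
        intro i hi
        rcases eq_or_ne (res c') 0 with h0 | h0
        · rw [h0, mul_zero, hα0]
        · have hnd : (res c').natDegree < m := by
            rwa [← Polynomial.natDegree_lt_iff_degree_lt h0] at hd
          rw [hβ (res c') i (Or.inr (by omega)),
            Polynomial.coeff_eq_zero_of_natDegree_lt (by omega), zero_mul]
      have hprod1 : (∏ i : Fin k,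
          (if α (Polynomial.X ^ (i : ℕ) * res c') = 0 then (q : ℂ) else 0)) = (q : ℂ) ^ k := by
        rw [Finset.prod_congr rfl fun (i : Fin k) _ => if_pos (hzero i (le_of_lt i.2))]
        simp
      rw [hprod1, if_pos (hzero k le_rfl), if_neg (ne_of_lt hd)]
      ring
    · -- degree = m
      have hV0 : res c' ≠ 0 := fun h => by
        rw [h, Polynomial.degree_zero] at hd; exact (by simp at hd)
      have hnd : (res c').natDegree = m := Polynomial.natDegree_eq_of_degree_eq_some hd
      have hzero : ∀ i : ℕ, i < k → α (Polynomial.X ^ i * res c') = 0 := by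
        intro i hi
        rw [hβ (res c') i (Or.inr (by omega)),
          Polynomial.coeff_eq_zero_of_natDegree_lt (by omega), zero_mul]
      have hne : α (Polynomial.X ^ k * res c') ≠ 0 := by
        rw [hβ (res c') k (Or.inr (by omega)), show n - 1 - k = m by omega]
        refine mul_ne_zero (fun h => hV0 ?_) (inv_ne_zero hc0)
        exact Polynomial.leadingCoeff_eq_zero.mp (by rwa [Polynomial.leadingCoeff, hnd])
      have hprod1 : (∏ i : Fin k,
          (if α (Polynomial.X ^ (i : ℕ) * res c') = 0 then (q : ℂ) else 0)) = (q : ℂ) ^ k := by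
        rw [Finset.prod_congr rfl fun (i : Fin k) _ => if_pos (hzero i i.2)]
        simp
      rw [hprod1, if_neg hne, if_pos hd, show n - m = k + 1 by omega]
      ring
    · -- degree > m
      have hV0 : res c' ≠ 0 := fun h => by
        rw [h, Polynomial.degree_zero] at hd; exact (by simp at hd)
      have hdm : m < (res c').natDegree := by
        rwa [Polynomial.degree_eq_natDegree hV0, Nat.cast_lt] at hd
      have hdn : (res c').natDegree < n := by
        rwa [Polynomial.degree_eq_natDegree hV0, Nat.cast_lt] at hVn
      have hne : α (Polynomial.X ^ (n - 1 - (res c').natDegree) * res c') ≠ 0 := by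
        rw [hβ (res c') _ (Or.inr (by omega)),
          show n - 1 - (n - 1 - (res c').natDegree) = (res c').natDegree by omega]
        refine mul_ne_zero (fun h => hV0 (Polynomial.leadingCoeff_eq_zero.mp h))
          (inv_ne_zero hc0)
      have hprod0 : (∏ i : Fin k,
          (if α (Polynomial.X ^ (i : ℕ) * res c') = 0 then (q : ℂ) else 0)) = 0 := by
        refine Finset.prod_eq_zero
          (Finset.mem_univ (⟨n - 1 - (res c').natDegree, by omega⟩ : Fin k)) ?_
        rw [if_neg (by simpa using hne)]
      rw [hprod0, if_neg (ne_of_gt hd)]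
      ring
  have hD : ∑ a : (ZMod q)ˣ, ∑ c : Fin m → ZMod q,
        F (Polynomial.C (a : ZMod q) * Polynomial.X ^ m + res c)
      = ∑ c' : Fin n → ZMod q,
          (if (res c').degree = (m : ℕ) then F (res c') else 0) := by
    have hmn' : m < n := by omega
    rw [← Finset.sum_product', ← Finset.sum_filter]
    refine Finset.sum_nbij'
      (fun p => fun jj : Fin n =>
        if h : (jj : ℕ) < m then p.2 ⟨jj, h⟩ else if (jj : ℕ) = m then (p.1 : ZMod q) else 0)
      (fun c' => (if h : c' ⟨m, hmn'⟩ = 0 then 1 else Units.mk0 _ h,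
        fun ii : Fin m => c' ⟨ii, lt_trans ii.2 hmn'⟩))
      ?_ ?_ ?_ ?_ ?_
    · rintro ⟨a, c⟩ -
      rw [Finset.mem_filter]
      refine ⟨Finset.mem_univ _, ?_⟩
      rw [res_split q hmn']
      rw [Polynomial.degree_add_eq_left_of_degree_lt, Polynomial.degree_C_mul_X_pow m a.ne_zero]
      rw [Polynomial.degree_C_mul_X_pow m a.ne_zero]
      exact res_degree q c
    · intro c' _
      exact Finset.mem_univ _
    · rintro ⟨a, c⟩ -
      have h1 : ¬ ((⟨m, hmn'⟩ : Fin n) : ℕ) < m := by simp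
      have h2 : ((⟨m, hmn'⟩ : Fin n) : ℕ) = m := rfl
      refine Prod.ext ?_ ?_
      · simp only [dif_neg h1, if_pos h2, dif_neg a.ne_zero]
        exact Units.ext (by simp)
      · funext ii
        simp only [dif_pos ii.2]
    · intro c' hc'
      rw [Finset.mem_filter] at hc'
      have hcm : c' ⟨m, hmn'⟩ ≠ 0 := by
        have := Polynomial.coeff_ne_zero_of_eq_degree hc'.2
        rwa [res_coeff, dif_pos hmn'] at this
      funext jj
      by_cases h1 : (jj : ℕ) < m
      · simp only [dif_pos h1]
      · by_cases h2 : (jj : ℕ) = m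
        · simp only [dif_neg h1, if_pos h2, dif_neg hcm]
          have : jj = ⟨m, hmn'⟩ := by ext; exact h2
          rw [this]
          simp
        · simp only [dif_neg h1, if_neg h2]
          have : (res c').coeff jj = 0 := by
            refine Polynomial.coeff_eq_zero_of_degree_lt ?_
            rw [hc'.2, Nat.cast_lt]
            omega
          rw [res_coeff, dif_pos jj.2] at this
          simp only [Fin.eta] at this
          exact this.symm
    · rintro ⟨a, c⟩ -
      rw [res_split q hmn']
  -- assembly
  have hFhat' : ∀ u : Polynomial (ZMod q), Fhat u
      = ∑ c' : Fin n → ZMod q, F (res c') * ZMod.stdAddChar (α (u * res c')) := by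
    intro u
    rw [hFhat u]
    exact Finset.sum_congr rfl fun c' _ => by rw [eChar_eq_std, ← hαdef]
  have e1 : ∑ a : (ZMod q)ˣ, ∑ c : Fin k → ZMod q,
        Fhat (Polynomial.C (a : ZMod q) * Polynomial.X ^ k + res c)
      = ∑ c' : Fin n → ZMod q, F (res c') *
          ∑ a : (ZMod q)ˣ, ∑ c : Fin k → ZMod q,
            ZMod.stdAddChar (α ((Polynomial.C (a : ZMod q) * Polynomial.X ^ k + res c) * res c')) := by
    simp only [hFhat']
    rw [show (∑ a : (ZMod q)ˣ, ∑ c : Fin k → ZMod q, ∑ c' : Fin n → ZMod q,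
          F (res c') * ZMod.stdAddChar (α ((Polynomial.C (a : ZMod q) * Polynomial.X ^ k + res c) * res c')))
        = ∑ c' : Fin n → ZMod q, ∑ a : (ZMod q)ˣ, ∑ c : Fin k → ZMod q,
          F (res c') * ZMod.stdAddChar (α ((Polynomial.C (a : ZMod q) * Polynomial.X ^ k + res c) * res c')) by
      exact (Finset.sum_congr rfl fun a _ => Finset.sum_comm).trans Finset.sum_comm]
    exact Finset.sum_congr rfl fun c' _ => by
      rw [Finset.mul_sum]
      exact Finset.sum_congr rfl fun a _ => by rw [Finset.mul_sum]
  have e2 : ∑ c : Fin k → ZMod q, Fhat (res c)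
      = ∑ c' : Fin n → ZMod q, F (res c') *
          ∑ c : Fin k → ZMod q, ZMod.stdAddChar (α (res c * res c')) := by
    simp only [hFhat']
    rw [Finset.sum_comm]
    exact Finset.sum_congr rfl fun c' _ => by rw [Finset.mul_sum]
  rw [hD, e1, e2]
  have hpow : (q : ℂ) ^ m / (q : ℂ) ^ n * (q : ℂ) ^ (n - m) = 1 := by
    rw [show n = m + (n - m) by omega, pow_add]
    field_simp
    rw [Nat.add_sub_cancel_left]
  have e3 : -(∑ c' : Fin n → ZMod q, F (res c') *
          ∑ a : (ZMod q)ˣ, ∑ c : Fin k → ZMod q,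
            ZMod.stdAddChar (α ((Polynomial.C (a : ZMod q) * Polynomial.X ^ k + res c) * res c')))
        + ((q : ℂ) - 1) * ∑ c' : Fin n → ZMod q, F (res c') *
            ∑ c : Fin k → ZMod q, ZMod.stdAddChar (α (res c * res c'))
      = ∑ c' : Fin n → ZMod q,
          F (res c') * (if (res c').degree = (m : ℕ) then (q : ℂ) ^ (n - m) else 0) := by
    rw [Finset.mul_sum, ← Finset.sum_neg_distrib, ← Finset.sum_add_distrib]
    refine Finset.sum_congr rfl fun c' _ => ?_
    rw [← hkey c']
    ring
  rw [e3, Finset.mul_sum]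
  refine Finset.sum_congr rfl fun c' _ => ?_
  by_cases hdm : (res c').degree = (m : ℕ)
  · rw [if_pos hdm, if_pos hdm,
      show (q : ℂ) ^ m / (q : ℂ) ^ n * (F (res c') * (q : ℂ) ^ (n - m))
        = F (res c') * ((q : ℂ) ^ m / (q : ℂ) ^ n * (q : ℂ) ^ (n - m)) by ring,
      hpow, mul_one]
  · rw [if_neg hdm, if_neg hdm]
    ring
end

section
/- Let q be an odd prime and P ∈ F_q[t] a monic irreducible polynomial, F_P = F_q[t]/(P). For α, β ∈ F_q[t], define F̂(α, β; P) = Σ_{x ∈ F_P} Σ_{A mod P} Σ_{B mod P} ((x³+Ax+B)/P) e((αA+βB)/P). Then F̂(α, β; P) = |P|^{3/2}·ε_P·(β/P)·e(−α³β̄²/P), where β̄ denotes the inverse of β mod P (and 0̄ = 0), and ε_P is the fourth root of unity with G(1,χ_P)=ε_P|P|^{1/2}. In particular, |F̂(α, β; P)| = |P|^{3/2} when P ∤ β, and F̂(α, β; P) = 0 when P | β. -/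
set_option maxHeartbeats 1000000

open Polynomial

open Classical in
/-- The quadratic residue symbol `(V/P)` modulo a monic irreducible `P`. -/
noncomputable def legSym (q : ℕ) (P V : Polynomial (ZMod q)) : ℂ :=
  if P ∣ V then 0 else if ∃ W : Polynomial (ZMod q), P ∣ (W ^ 2 - V) then 1 else -1

/-- The Gauss sum `G(V, χ_P) = Σ_{W mod P} (W/P) e(VW/P)`. -/
noncomputable def gaussSum' (q : ℕ) [Fact (Nat.Prime q)] (P V : Polynomial (ZMod q)) : ℂ :=
  ∑ c : Fin P.natDegree → ZMod q,
    legSym q P (res c) * eChar q (polyToLS q (V * res c) / polyToLS q P)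

/-! ### Auxiliary lemmas -/

namespace WCSAux

section FF
variable {F : Type*} [Field F] [Fintype F] [DecidableEq F]
variable (ψ : F → ℂ)

lemma sum_psi_zero (hψ : ∀ x y, ψ (x + y) = ψ x * ψ y) (hnt : ∃ a, ψ a ≠ 1) :
    ∑ a : F, ψ a = 0 := by
  obtain ⟨a₀, hn⟩ := hnt
  have h := Equiv.sum_comp (Equiv.addLeft a₀) ψ
  simp only [Equiv.coe_addLeft, hψ, ← Finset.mul_sum] at h
  have h2 : (ψ a₀ - 1) * ∑ a : F, ψ a = 0 := by rw [sub_mul, one_mul, h, sub_self]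
  rcases mul_eq_zero.mp h2 with h3 | h3
  · exact absurd (by linear_combination h3 : ψ a₀ = 1) hn
  · exact h3

lemma sum_psi_mul (hψ : ∀ x y, ψ (x + y) = ψ x * ψ y) (hψ0 : ψ 0 = 1) (hnt : ∃ a, ψ a ≠ 1)
    (γ : F) : ∑ a : F, ψ (γ * a) = if γ = 0 then (Fintype.card F : ℂ) else 0 := by
  split_ifs with h
  · simp [h, hψ0]
  · have := Equiv.sum_comp (Equiv.mulLeft₀ γ h) ψ
    simp only [Equiv.mulLeft₀_apply] at this
    rw [this, sum_psi_zero ψ hψ hnt]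

lemma quad_gauss (B : F) (hB : B ≠ 0) :
    ∑ b : F, ((quadraticChar F b : ℤ) : ℂ) * ψ (B * b)
      = ((quadraticChar F B : ℤ) : ℂ) * ∑ b : F, ((quadraticChar F b : ℤ) : ℂ) * ψ b := by
  have hBi : B⁻¹ ≠ 0 := inv_ne_zero hB
  have h := Equiv.sum_comp (Equiv.mulLeft₀ B⁻¹ hBi)
    (fun b => ((quadraticChar F b : ℤ) : ℂ) * ψ (B * b))
  simp only [Equiv.mulLeft₀_apply] at h
  rw [← h]
  have hchi : quadraticChar F B⁻¹ = quadraticChar F B := by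
    have h1 : quadraticChar F B * quadraticChar F B = 1 := by
      have := quadraticChar_sq_one hB; rwa [pow_two] at this
    have h2 : quadraticChar F B⁻¹ * quadraticChar F B = 1 := by
      rw [← map_mul, inv_mul_cancel₀ hB, map_one]
    have hne : quadraticChar F B ≠ 0 := by
      intro h0; rw [h0, mul_zero] at h1; exact one_ne_zero h1.symm
    exact mul_right_cancel₀ hne (h2.trans h1.symm)
  rw [Finset.mul_sum]
  refine Finset.sum_congr rfl fun b _ => ?_
  rw [map_mul, hchi, mul_inv_cancel_left₀ hB]
  push_cast
  ring

lemma main_sum (hF2 : ringChar F ≠ 2)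
    (hψ : ∀ x y, ψ (x + y) = ψ x * ψ y) (hψ0 : ψ 0 = 1) (hnt : ∃ a, ψ a ≠ 1) (A B : F) :
    (∑ x : F, ∑ a : F, ∑ b : F,
        ((quadraticChar F (x^3 + a*x + b) : ℤ) : ℂ) * ψ (A*a + B*b))
    = if B = 0 then 0
      else (Fintype.card F : ℂ) * ((quadraticChar F B : ℤ) : ℂ) * ψ (-(A^3 * B⁻¹^2)) *
        (∑ b : F, ((quadraticChar F b : ℤ) : ℂ) * ψ b) := by
  have step1 : ∀ x a : F, (∑ b : F,
      ((quadraticChar F (x^3 + a*x + b) : ℤ) : ℂ) * ψ (A*a + B*b))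
      = ψ (A*a - B*(x^3+a*x)) * ∑ b : F, ((quadraticChar F b : ℤ) : ℂ) * ψ (B*b) := by
    intro x a
    have h := Equiv.sum_comp (Equiv.subRight (x^3+a*x))
      (fun b => ((quadraticChar F (x^3 + a*x + b) : ℤ) : ℂ) * ψ (A*a + B*b))
    rw [← h, Finset.mul_sum]
    refine Finset.sum_congr rfl fun b _ => ?_
    simp only [Equiv.subRight_apply]
    rw [show x^3+a*x+(b - (x^3+a*x)) = b by ring,
      show A*a + B*(b - (x^3+a*x)) = (A*a - B*(x^3+a*x)) + B*b by ring, hψ]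
    ring
  simp only [step1]
  by_cases hB : B = 0
  · rw [if_pos hB]
    have hz : ∑ b : F, ((quadraticChar F b : ℤ) : ℂ) * ψ (B*b) = 0 := by
      simp only [hB, zero_mul, hψ0, mul_one]
      rw [show (∑ b : F, ((quadraticChar F b : ℤ) : ℂ)) = ((∑ b : F, quadraticChar F b : ℤ) : ℂ)
        by push_cast; rfl]
      rw [quadraticChar_sum_zero hF2]; simp
    rw [Finset.sum_congr rfl fun x (_ : x ∈ Finset.univ) =>
      Finset.sum_congr rfl fun a (_ : a ∈ Finset.univ) => by rw [hz, mul_zero]]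
    simp
  · rw [if_neg hB]
    have step2 : ∀ x : F, (∑ a : F, ψ (A*a - B*(x^3+a*x)))
        = ψ (-(B*x^3)) * if A - B*x = 0 then (Fintype.card F : ℂ) else 0 := by
      intro x
      have : ∀ a : F, A*a - B*(x^3+a*x) = (-(B*x^3)) + (A - B*x)*a := fun a => by ring
      simp only [this, hψ, ← Finset.mul_sum]
      rw [sum_psi_mul ψ hψ hψ0 hnt (A - B*x)]
    simp only [← Finset.sum_mul]
    rw [show (∑ x : F, ∑ a : F, ψ (A*a - B*(x^3+a*x)))
        = ∑ x : F, (ψ (-(B*x^3)) * if A - B*x = 0 then (Fintype.card F : ℂ) else 0)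
      from Finset.sum_congr rfl fun x _ => step2 x]
    rw [Finset.sum_eq_single (B⁻¹*A)]
    · rw [if_pos (by field_simp; ring), quad_gauss ψ B hB]
      rw [show -(B*(B⁻¹*A)^3) = -(A^3 * B⁻¹^2) by field_simp]
      ring
    · intro x _ hx
      rw [if_neg, mul_zero]
      intro h0
      exact hx (by field_simp at h0 ⊢; linear_combination -h0)
    · intro h; exact absurd (Finset.mem_univ _) h

end FF

variable (q : ℕ) [Fact (Nat.Prime q)]

lemma qne : (q : ℂ) ≠ 0 := Nat.cast_ne_zero.mpr (Fact.out : q.Prime).ne_zero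

lemma tvar_eq : tvar q = HahnSeries.single (-1 : ℤ) (1 : ZMod q) := by
  rw [tvar]
  refine inv_eq_of_mul_eq_one_right ?_
  rw [HahnSeries.single_mul_single, one_mul]
  norm_num

lemma LS_coeff_sum {ι : Type*} (s : Finset ι) (f : ι → LaurentSeries (ZMod q)) (k : ℤ) :
    (∑ i ∈ s, f i).coeff k = ∑ i ∈ s, (f i).coeff k := by
  induction s using Finset.cons_induction with
  | empty => simp
  | cons a s ha ih => rw [Finset.sum_cons, Finset.sum_cons, HahnSeries.coeff_add, ih]

lemma algebraMap_LS (r : ZMod q) :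
    algebraMap (ZMod q) (LaurentSeries (ZMod q)) r = HahnSeries.single (0:ℤ) r := by
  rw [HahnSeries.algebraMap_apply', PowerSeries.algebraMap_apply, HahnSeries.ofPowerSeries_C,
    HahnSeries.C_apply]
  simp

lemma polyToLS_eq (A : Polynomial (ZMod q)) :
    polyToLS q A = ∑ j ∈ A.support, HahnSeries.single (-(j:ℤ)) (A.coeff j) := by
  rw [polyToLS, Polynomial.eval₂_eq_sum, Polynomial.sum_def]
  refine Finset.sum_congr rfl fun j _ => ?_
  rw [tvar_eq, HahnSeries.single_pow, algebraMap_LS, HahnSeries.single_mul_single]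
  simp

lemma polyToLS_coeff (A : Polynomial (ZMod q)) (j : ℕ) :
    (polyToLS q A).coeff (-(j:ℤ)) = A.coeff j := by
  rw [polyToLS_eq, LS_coeff_sum]
  by_cases hj : j ∈ A.support
  · rw [Finset.sum_eq_single j]
    · simp
    · intro b _ hb
      exact HahnSeries.coeff_single_of_ne (by simpa using fun h => hb (by exact_mod_cast h.symm))
    · intro h; exact absurd hj h
  · rw [Finset.sum_eq_zero, eq_comm]
    · simpa using hj
    · intro b hb
      refine HahnSeries.coeff_single_of_ne ?_
      intro h
      have hbj : b = j := by exact_mod_cast (neg_injective h).symm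
      exact (by simpa [hbj] using hb : A.coeff j ≠ 0) (by simpa using hj)

lemma polyToLS_coeff_pos (A : Polynomial (ZMod q)) (k : ℤ) (hk : 0 < k) :
    (polyToLS q A).coeff k = 0 := by
  rw [polyToLS_eq, LS_coeff_sum]
  refine Finset.sum_eq_zero fun b _ => HahnSeries.coeff_single_of_ne ?_
  intro h; omega

lemma polyToLS_ne_zero {A : Polynomial (ZMod q)} (hA : A ≠ 0) : polyToLS q A ≠ 0 := by
  intro h
  have h2 := polyToLS_coeff q A A.natDegree
  rw [h, HahnSeries.coeff_zero] at h2
  exact (Polynomial.leadingCoeff_ne_zero.mpr hA) h2.symm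

lemma polyToLS_order {A : Polynomial (ZMod q)} (hA : A ≠ 0) :
    (polyToLS q A).order = -(A.natDegree : ℤ) := by
  have h1 : (polyToLS q A).coeff (-(A.natDegree : ℤ)) ≠ 0 := by
    rw [polyToLS_coeff]
    exact Polynomial.leadingCoeff_ne_zero.mpr hA
  refine le_antisymm (HahnSeries.order_le_of_coeff_ne_zero h1) ?_
  rw [HahnSeries.order_of_ne (polyToLS_ne_zero q hA)]
  refine le_of_not_gt fun hlt => ?_
  have hmem := Set.IsWF.min_mem (polyToLS q A).isWF_support
    (HahnSeries.support_nonempty_iff.2 (polyToLS_ne_zero q hA))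
  set m := Set.IsWF.min (polyToLS q A).isWF_support _ with hm
  have hne : (polyToLS q A).coeff m ≠ 0 := hmem
  rcases le_or_gt m 0 with hle | hpos
  · obtain ⟨j, hj⟩ : ∃ j : ℕ, m = -(j:ℤ) := ⟨m.natAbs, by omega⟩
    rw [hj, polyToLS_coeff] at hne
    have : j ≤ A.natDegree := Polynomial.le_natDegree_of_ne_zero hne
    omega
  · exact hne (polyToLS_coeff_pos q A m hpos)

lemma div_coeff_one {P C : Polynomial (ZMod q)} (hP : P.Monic) (hn : 0 < P.natDegree)
    (hC : C.natDegree < P.natDegree) :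
    (polyToLS q C / polyToLS q P).coeff 1 = C.coeff (P.natDegree - 1) := by
  set n := P.natDegree with hndef
  have hP0 : P ≠ 0 := hP.ne_zero
  have hPt : polyToLS q P ≠ 0 := polyToLS_ne_zero q hP0
  have hPinv : (polyToLS q P)⁻¹ ≠ 0 := inv_ne_zero hPt
  have hordP : (polyToLS q P).order = -(n:ℤ) := polyToLS_order q hP0
  have hmul1 : polyToLS q P * (polyToLS q P)⁻¹ = 1 := mul_inv_cancel₀ hPt
  have hordinv : ((polyToLS q P)⁻¹).order = (n:ℤ) := by
    have := HahnSeries.order_mul hPt hPinv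
    rw [hmul1, HahnSeries.order_one, hordP] at this
    omega
  have hleadP : (polyToLS q P).leadingCoeff = 1 := by
    rw [HahnSeries.leadingCoeff_eq, hordP, polyToLS_coeff]
    exact hP
  have hleadinv : ((polyToLS q P)⁻¹).leadingCoeff = 1 := by
    have h2 := HahnSeries.coeff_mul_order_add_order (polyToLS q P) (polyToLS q P)⁻¹
    rw [hmul1, hordP, hordinv, hleadP, one_mul] at h2
    rw [← h2]
    norm_num
  rcases eq_or_ne C 0 with rfl | hC0
  · simp [polyToLS]
  have hordC : (polyToLS q C).order = -(C.natDegree : ℤ) := polyToLS_order q hC0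
  rw [div_eq_mul_inv]
  have hordg : (polyToLS q C * (polyToLS q P)⁻¹).order = -(C.natDegree:ℤ) + n := by
    rw [HahnSeries.order_mul (polyToLS_ne_zero q hC0) hPinv, hordC, hordinv]
  rcases lt_or_eq_of_le (Nat.lt_succ_iff.mp (by omega : C.natDegree < (n-1)+1)) with hlt | heq
  · rw [HahnSeries.coeff_eq_zero_of_lt_order (by rw [hordg]; omega : (1:ℤ) < _), eq_comm]
    exact Polynomial.coeff_eq_zero_of_natDegree_lt (by omega)
  · have h3 := HahnSeries.coeff_mul_order_add_order (polyToLS q C) (polyToLS q P)⁻¹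
    rw [hordC, hordinv, hleadinv, mul_one] at h3
    have : -(C.natDegree:ℤ) + n = 1 := by omega
    rw [this] at h3
    rw [h3, HahnSeries.leadingCoeff_eq, hordC, polyToLS_coeff, heq]

lemma exp_nat_q (m : ℕ) :
    Complex.exp (2 * Real.pi * Complex.I * ((m % q : ℕ) : ℂ) / q)
      = Complex.exp (2 * Real.pi * Complex.I * (m : ℂ) / q) := by
  conv_rhs => rw [← Nat.div_add_mod m q]
  rw [show 2 * (Real.pi:ℂ) * Complex.I * ((q * (m / q) + m % q : ℕ) : ℂ) / q
      = ((m / q : ℕ) : ℂ) * (2 * Real.pi * Complex.I)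
        + 2 * Real.pi * Complex.I * ((m % q : ℕ) : ℂ) / q by
    have hq := qne q
    push_cast
    field_simp]
  rw [Complex.exp_add, show ((m / q : ℕ) : ℂ) = ((m / q : ℕ) : ℤ) by push_cast; rfl,
    Complex.exp_int_mul_two_pi_mul_I, one_mul]

lemma eChar_add (a b : LaurentSeries (ZMod q)) :
    eChar q (a + b) = eChar q a * eChar q b := by
  have hq1 : 1 < q := (Fact.out : q.Prime).one_lt
  haveI : NeZero q := ⟨by omega⟩
  rw [eChar, eChar, eChar, HahnSeries.coeff_add, ZMod.val_add, exp_nat_q, ← Complex.exp_add]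
  congr 1
  push_cast
  field_simp

lemma eChar_zero : eChar q 0 = 1 := by
  rw [eChar, HahnSeries.coeff_zero, ZMod.val_zero]
  simp

/-- The character `A ↦ e(A/P)` on polynomials. -/
noncomputable def Efun (P A : Polynomial (ZMod q)) : ℂ :=
  eChar q (polyToLS q A / polyToLS q P)

lemma Efun_add (P A₁ A₂ : Polynomial (ZMod q)) :
    Efun q P (A₁ + A₂) = Efun q P A₁ * Efun q P A₂ := by
  rw [Efun, Efun, Efun, polyToLS, Polynomial.eval₂_add, ← polyToLS, ← polyToLS, add_div,
    eChar_add]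

lemma Efun_mulP (P : Polynomial (ZMod q)) (hP0 : P ≠ 0) (D : Polynomial (ZMod q)) :
    Efun q P (P * D) = 1 := by
  rw [Efun, show polyToLS q (P * D) = polyToLS q P * polyToLS q D by
      rw [polyToLS, Polynomial.eval₂_mul, ← polyToLS, ← polyToLS],
    mul_div_cancel_left₀ _ (polyToLS_ne_zero q hP0), eChar,
    polyToLS_coeff_pos q D 1 one_pos, ZMod.val_zero]
  simp

lemma Efun_zero (P : Polynomial (ZMod q)) : Efun q P 0 = 1 := by
  rw [Efun, polyToLS, Polynomial.eval₂_zero, zero_div, eChar_zero]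

lemma Efun_congr (P : Polynomial (ZMod q)) (hP0 : P ≠ 0) {A₁ A₂ : Polynomial (ZMod q)}
    (h : AdjoinRoot.mk P A₁ = AdjoinRoot.mk P A₂) : Efun q P A₁ = Efun q P A₂ := by
  obtain ⟨D, hD⟩ := AdjoinRoot.mk_eq_mk.mp h
  have hA : A₁ = A₂ + P * D := by linear_combination hD
  rw [hA, Efun_add, Efun_mulP q P hP0 D, mul_one]

lemma exp_two_pi_div_q_ne_one : Complex.exp (2 * Real.pi * Complex.I * 1 / q) ≠ 1 := by
  intro h
  rw [Complex.exp_eq_one_iff] at h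
  obtain ⟨k, hk⟩ := h
  have hq := qne q
  have h2 : (2 * Real.pi * Complex.I) ≠ 0 := by
    simp [Real.pi_ne_zero, Complex.I_ne_zero]
  field_simp at hk
  have h6 : (2 * (Real.pi:ℂ) * Complex.I) * ((k:ℂ) * q - 1) = 0 := by linear_combination -(2 * (Real.pi:ℂ) * Complex.I) * hk
  rcases mul_eq_zero.mp h6 with h | h
  · exact h2 h
  · have h3 : (k : ℂ) * q = 1 := by linear_combination h
    have h4 : (k * q : ℤ) = 1 := by exact_mod_cast h3
    have h5 : (q : ℤ) ∣ 1 := ⟨k, by rw [← h4]; ring⟩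
    have hq1 : 1 < q := (Fact.out : q.Prime).one_lt
    have := Int.le_of_dvd one_pos h5
    omega

end WCSAux

open WCSAux

/-- Evaluation of the complete character sum
`F̂(α, β; P) = Σ_{x mod P} Σ_{A mod P} Σ_{B mod P} ((x³+Ax+B)/P) e((αA+βB)/P)`:
one has `F̂(α, β; P) = |P|^{3/2}·ε_P·(β/P)·e(-α³β̄²/P)`, where `β̄` is the inverse of `β`
mod `P` (with `0̄ = 0`) and `ε_P` is the fourth root of unity with
`G(1, χ_P) = ε_P |P|^{1/2}`.  In particular `F̂(α, β; P) = 0` when `P ∣ β`. -/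
theorem weierstrass_character_sum_evaluation (q : ℕ) [Fact (Nat.Prime q)] (hq : Odd q)
    (P : Polynomial (ZMod q)) (hP : P.Monic) (hirr : Irreducible P)
    (α β βbar : Polynomial (ZMod q))
    (hβbar0 : P ∣ β → βbar = 0)
    (hβbar1 : ¬ P ∣ β → P ∣ (β * βbar - 1))
    (ε : ℂ) (hε4 : ε ^ 4 = 1)
    (hε : gaussSum' q P 1 = ε * (Real.sqrt ((q : ℝ) ^ P.natDegree) : ℂ))
    (Fhat : ℂ)
    (hFhat : Fhat = ∑ x : Fin P.natDegree → ZMod q, ∑ a : Fin P.natDegree → ZMod q,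
        ∑ b : Fin P.natDegree → ZMod q,
          legSym q P ((res x) ^ 3 + res a * res x + res b) *
            eChar q (polyToLS q (α * res a + β * res b) / polyToLS q P)) :
    Fhat = (Real.sqrt ((q : ℝ) ^ P.natDegree) : ℂ) ^ 3 * ε * legSym q P β *
        eChar q (polyToLS q (-(α ^ 3 * βbar ^ 2)) / polyToLS q P) ∧
      (P ∣ β → Fhat = 0) := by
  classical
  have hn0 : 0 < P.natDegree := hirr.natDegree_pos
  have hP0 : P ≠ 0 := hP.ne_zero
  haveI := Fact.mk hirr
  set K := AdjoinRoot P with hK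
  let b : Module.Basis (Fin P.natDegree) (ZMod q) K := AdjoinRoot.powerBasisAux' hP
  let e : (Fin P.natDegree → ZMod q) ≃ K :=
    (Finsupp.equivFunOnFinite.symm : (Fin P.natDegree → ZMod q) ≃ _).trans b.repr.symm.toEquiv
  have he : ∀ c, e c = AdjoinRoot.mk P (res c) := by
    intro c
    show b.repr.symm (Finsupp.equivFunOnFinite.symm c) = _
    rw [AdjoinRoot.powerBasisAux'_repr_symm_apply]
    congr 1
    rw [res]
    refine Finset.sum_congr rfl fun i _ => ?_
    rw [← Polynomial.C_mul_X_pow_eq_monomial]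
    rfl
  letI : Fintype K := Fintype.ofEquiv _ e
  have hcard : (Fintype.card K : ℂ) = (q : ℂ) ^ P.natDegree := by
    rw [Fintype.card_congr e.symm]
    simp [ZMod.card]
  have hchar : ringChar K = q := by
    haveI : CharP K q := charP_of_injective_algebraMap (algebraMap (ZMod q) K).injective q
    exact ringChar.eq K q
  have hF2 : ringChar K ≠ 2 := by
    rw [hchar]
    rintro rfl
    exact (by norm_num : ¬ Odd 2) hq
  -- the Legendre symbol is the quadratic character of the residue field
  have hleg : ∀ V, legSym q P V = ((quadraticChar K (AdjoinRoot.mk P V) : ℤ) : ℂ) := by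
    intro V
    rw [legSym, quadraticChar_apply, quadraticCharFun]
    by_cases h1 : P ∣ V
    · rw [if_pos h1, if_pos (AdjoinRoot.mk_eq_zero.mpr h1)]; simp
    · rw [if_neg h1, if_neg (fun h => h1 (AdjoinRoot.mk_eq_zero.mp h))]
      by_cases h2 : ∃ W : Polynomial (ZMod q), P ∣ (W ^ 2 - V)
      · obtain ⟨W, hW⟩ := h2
        have hsq : IsSquare (AdjoinRoot.mk P V) := by
          refine ⟨AdjoinRoot.mk P W, ?_⟩
          have h0 : AdjoinRoot.mk P (W ^ 2 - V) = 0 := AdjoinRoot.mk_eq_zero.mpr hW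
          rw [map_sub, map_pow, sub_eq_zero] at h0
          rw [← h0, pow_two]
        rw [if_pos ⟨W, hW⟩, if_pos hsq]; simp
      · have hsq : ¬ IsSquare (AdjoinRoot.mk P V) := by
          rintro ⟨s, hs⟩
          obtain ⟨W, rfl⟩ := AdjoinRoot.mk_surjective s
          refine h2 ⟨W, AdjoinRoot.mk_eq_zero.mp ?_⟩
          rw [map_sub, map_pow, sub_eq_zero, hs, pow_two]
        rw [if_neg h2, if_neg hsq]; simp
  -- the additive character on the residue field
  set Ψ : K → ℂ := fun k => Efun q P (res (e.symm k)) with hΨdef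
  have hmkres : ∀ k, AdjoinRoot.mk P (res (e.symm k)) = k :=
    fun k => (he _).symm.trans (e.apply_symm_apply k)
  have hEΨ : ∀ A', Ψ (AdjoinRoot.mk P A') = Efun q P A' :=
    fun A' => Efun_congr q P hP0 (hmkres _)
  have hψadd : ∀ x y, Ψ (x + y) = Ψ x * Ψ y := by
    intro x y
    have h1 : AdjoinRoot.mk P (res (e.symm (x + y)))
        = AdjoinRoot.mk P (res (e.symm x) + res (e.symm y)) := by
      rw [hmkres, map_add (AdjoinRoot.mk P), hmkres, hmkres]
    show Efun q P (res (e.symm (x + y))) = _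
    rw [Efun_congr q P hP0 h1, Efun_add]
  have hψ0 : Ψ 0 = 1 := by
    have h1 : AdjoinRoot.mk P (res (e.symm 0)) = AdjoinRoot.mk P 0 := by
      rw [hmkres, map_zero]
    show Efun q P (res (e.symm 0)) = 1
    rw [Efun_congr q P hP0 h1, Efun_zero]
  have hnt : ∃ k, Ψ k ≠ 1 := by
    refine ⟨AdjoinRoot.mk P (X ^ (P.natDegree - 1)), ?_⟩
    rw [hEΨ]
    have hd : (X ^ (P.natDegree - 1) : Polynomial (ZMod q)).natDegree < P.natDegree := by
      rw [Polynomial.natDegree_X_pow]; omega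
    have hc := div_coeff_one q hP hn0 hd
    rw [Polynomial.coeff_X_pow, if_pos rfl] at hc
    haveI : Fact (1 < q) := ⟨(Fact.out : q.Prime).one_lt⟩
    rw [Efun, eChar, hc, ZMod.val_one, Nat.cast_one]
    exact exp_two_pi_div_q_ne_one q
  set A := AdjoinRoot.mk P α with hA
  set B := AdjoinRoot.mk P β with hB
  -- rewrite Fhat as a triple sum over the residue field
  have hFhat2 : Fhat = ∑ x : K, ∑ a : K, ∑ b : K,
      ((quadraticChar K (x^3 + a*x + b) : ℤ) : ℂ) * Ψ (A*a + B*b) := by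
    rw [hFhat]
    have hterm : ∀ x a c : Fin P.natDegree → ZMod q,
        legSym q P ((res x) ^ 3 + res a * res x + res c) *
          eChar q (polyToLS q (α * res a + β * res c) / polyToLS q P)
        = ((quadraticChar K ((e x)^3 + (e a)*(e x) + (e c)) : ℤ) : ℂ)
            * Ψ (A*(e a) + B*(e c)) := by
      intro x a c
      rw [hleg]
      refine congrArg₂ (· * ·) ?_ ?_
      · refine congrArg (fun z => ((quadraticChar K z : ℤ) : ℂ)) ?_
        rw [map_add (AdjoinRoot.mk P), map_add (AdjoinRoot.mk P), map_mul (AdjoinRoot.mk P),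
          map_pow (AdjoinRoot.mk P), he, he, he]
      · rw [show A*(e a) + B*(e c) = AdjoinRoot.mk P (α * res a + β * res c) by
          rw [map_add (AdjoinRoot.mk P), map_mul (AdjoinRoot.mk P), map_mul (AdjoinRoot.mk P),
            he, he], hEΨ]
        rfl
    calc (∑ x : Fin P.natDegree → ZMod q, ∑ a : Fin P.natDegree → ZMod q,
          ∑ c : Fin P.natDegree → ZMod q,
          legSym q P ((res x) ^ 3 + res a * res x + res c) *
            eChar q (polyToLS q (α * res a + β * res c) / polyToLS q P))
        = ∑ x : Fin P.natDegree → ZMod q, ∑ a : Fin P.natDegree → ZMod q,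
          ∑ c : Fin P.natDegree → ZMod q,
          ((quadraticChar K ((e x)^3 + (e a)*(e x) + (e c)) : ℤ) : ℂ)
            * Ψ (A*(e a) + B*(e c)) := by
          exact Finset.sum_congr rfl fun x _ => Finset.sum_congr rfl fun a _ =>
            Finset.sum_congr rfl fun c _ => hterm x a c
      _ = ∑ x : Fin P.natDegree → ZMod q, ∑ a : Fin P.natDegree → ZMod q, ∑ c : K,
          ((quadraticChar K ((e x)^3 + (e a)*(e x) + c) : ℤ) : ℂ) * Ψ (A*(e a) + B*c) := by
          exact Finset.sum_congr rfl fun x _ => Finset.sum_congr rfl fun a _ =>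
            Equiv.sum_comp e (fun c : K =>
              ((quadraticChar K ((e x)^3 + (e a)*(e x) + c) : ℤ) : ℂ) * Ψ (A*(e a) + B*c))
      _ = ∑ x : Fin P.natDegree → ZMod q, ∑ a : K, ∑ c : K,
          ((quadraticChar K ((e x)^3 + a*(e x) + c) : ℤ) : ℂ) * Ψ (A*a + B*c) := by
          exact Finset.sum_congr rfl fun x _ => Equiv.sum_comp e (fun a : K => ∑ c : K,
            ((quadraticChar K ((e x)^3 + a*(e x) + c) : ℤ) : ℂ) * Ψ (A*a + B*c))
      _ = ∑ x : K, ∑ a : K, ∑ c : K,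
          ((quadraticChar K (x^3 + a*x + c) : ℤ) : ℂ) * Ψ (A*a + B*c) :=
          Equiv.sum_comp e (fun x : K => ∑ a : K, ∑ c : K,
            ((quadraticChar K (x^3 + a*x + c) : ℤ) : ℂ) * Ψ (A*a + B*c))
  rw [main_sum Ψ hF2 hψadd hψ0 hnt A B] at hFhat2
  -- Gauss sum bridge
  have hg : (∑ k : K, ((quadraticChar K k : ℤ) : ℂ) * Ψ k) = gaussSum' q P 1 := by
    rw [gaussSum', ← Equiv.sum_comp e (fun k : K => ((quadraticChar K k : ℤ) : ℂ) * Ψ k)]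
    refine Finset.sum_congr rfl fun c _ => ?_
    rw [one_mul, hleg, ← he]
    congr 1
    rw [he, hEΨ]
    rfl
  by_cases hPβ : P ∣ β
  · have hB0 : B = 0 := AdjoinRoot.mk_eq_zero.mpr hPβ
    rw [if_pos hB0] at hFhat2
    have hlegβ : legSym q P β = 0 := by rw [legSym, if_pos hPβ]
    refine ⟨?_, fun _ => hFhat2⟩
    rw [hFhat2, hlegβ]
    ring
  · have hB0 : B ≠ 0 := fun h => hPβ (AdjoinRoot.mk_eq_zero.mp h)
    rw [if_neg hB0, hg, hε, hcard] at hFhat2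
    have hbb : AdjoinRoot.mk P βbar = B⁻¹ := by
      have h1 : B * AdjoinRoot.mk P βbar = 1 := by
        have h0 := AdjoinRoot.mk_eq_zero.mpr (hβbar1 hPβ)
        rw [map_sub, map_mul, map_one, sub_eq_zero] at h0
        exact h0
      exact (inv_eq_of_mul_eq_one_right h1).symm
    have hψval : Ψ (-(A^3 * B⁻¹^2))
        = eChar q (polyToLS q (-(α ^ 3 * βbar ^ 2)) / polyToLS q P) := by
      rw [show -(A^3 * B⁻¹^2) = AdjoinRoot.mk P (-(α ^ 3 * βbar ^ 2)) by
        rw [map_neg, map_mul, map_pow, map_pow, hbb], hEΨ]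
      rfl
    have hlegβ : legSym q P β = ((quadraticChar K B : ℤ) : ℂ) := hleg β
    have hsqrt : ((Real.sqrt ((q : ℝ) ^ P.natDegree) : ℝ) : ℂ) ^ 3
        = (q : ℂ) ^ P.natDegree * ((Real.sqrt ((q : ℝ) ^ P.natDegree) : ℝ) : ℂ) := by
      have hy : (0:ℝ) ≤ (q : ℝ) ^ P.natDegree := by positivity
      have hr : (Real.sqrt ((q : ℝ) ^ P.natDegree)) ^ 3
          = (q : ℝ) ^ P.natDegree * Real.sqrt ((q : ℝ) ^ P.natDegree) := by
        rw [pow_succ, Real.sq_sqrt hy]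
      calc ((Real.sqrt ((q : ℝ) ^ P.natDegree) : ℝ) : ℂ) ^ 3
          = (((Real.sqrt ((q : ℝ) ^ P.natDegree)) ^ 3 : ℝ) : ℂ) := by push_cast; ring
        _ = _ := by rw [hr]; push_cast; ring
    refine ⟨?_, fun h => absurd h hPβ⟩
    rw [hFhat2, hlegβ, hψval, hsqrt]
    ring
end
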